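/- Let X := [-1,1]^d and P a probability measure on X × {-1,1} with fixed posterior version η. Assume P has ME α ∈ (0,∞] with constant c_ME and that Δ_η controls the noise from below with exponent γ ∈ (0,∞) and constant c_LC. Fix r > 0 and the set N_r. Then for every measurable f : X → {-1,1} and every t > 0, with f*_{L,P} := sign(2η−1) a Bayes decision function: E_P(L_{N_r}∘f − L_{N_r}∘f*_{L,P})² ≤ t^{-1} E_P(L_{N_r}∘f − L_{N_r}∘f*_{L,P}) + min{ (3 c_ME r)^α , c_ME^α (c_LC t)^{α/γ} }. -/

import Mathlib

open MeasureTheory Set Metric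
open scoped Classical ENNReal NNReal

noncomputable section

namespace RefinedMargin

abbrev Pt (d : ℕ) := Fin d → ℝ

/-- The input space `X = [-1,1]^d` (with the supremum norm coming from `Fin d → ℝ`). -/
def cubeX (d : ℕ) : Set (Pt d) := Set.Icc (fun _ => (-1 : ℝ)) (fun _ => (1 : ℝ))

variable {d : ℕ} {s : ℝ}

/-- `X_1 = {x ∈ X : η x > 1/2}`. -/
def X1 (η : Pt d → ℝ) : Set (Pt d) := {x | x ∈ cubeX d ∧ 1 / 2 < η x}

/-- `X_{-1} = {x ∈ X : η x < 1/2}`. -/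
def Xm1 (η : Pt d → ℝ) : Set (Pt d) := {x | x ∈ cubeX d ∧ η x < 1 / 2}

/-- `X_0 = {x ∈ X : η x = 1/2}`. -/
def X0 (η : Pt d → ℝ) : Set (Pt d) := {x | x ∈ cubeX d ∧ η x = 1 / 2}

/-- Distance to the decision boundary. -/
def Δ (η : Pt d → ℝ) (x : Pt d) : ℝ :=
  if x ∈ Xm1 η then Metric.infDist x (X1 η)
  else if x ∈ X1 η then Metric.infDist x (Xm1 η)
  else 0

/-- Relative boundary of `T` in `X`. -/
def relBoundary (X T : Set (Pt d)) : Set (Pt d) := closure T ∩ closure (X \ T) ∩ X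

/-- `T` is `m`-rectifiable: the image of a bounded subset of `ℝ^m` under a Lipschitz map. -/
def IsRectifiable (m : ℕ) (T : Set (Pt d)) : Prop :=
  ∃ (B : Set (Fin m → ℝ)) (g : (Fin m → ℝ) → Pt d) (K : NNReal),
    Bornology.IsBounded B ∧ LipschitzOnWith K g B ∧ g '' B = T

/-- Margin exponent `α` with constant `cME`. -/
def HasME (μ : Measure (Pt d)) (η : Pt d → ℝ) (α cME : ℝ) : Prop :=
  ∀ t : ℝ, 0 < t → μ {x | Δ η x < t} ≤ ENNReal.ofReal ((cME * t) ^ α)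

/-- Margin-noise exponent `β` with constant `cMNE`. -/
def HasMNE (μ : Measure (Pt d)) (η : Pt d → ℝ) (β cMNE : ℝ) : Prop :=
  ∀ t : ℝ, 0 < t → (∫ x in {x | Δ η x < t}, |2 * η x - 1| ∂μ) ≤ (cMNE * t) ^ β

/-- The distance to the decision boundary controls the noise from below with
exponent `γ` and constant `cLC`. -/
def LowerControl (μ : Measure (Pt d)) (η : Pt d → ℝ) (γ cLC : ℝ) : Prop :=
  ∀ᵐ x ∂μ, Δ η x ^ γ ≤ cLC * |2 * η x - 1|

/-- A partition of `ℝ^d` into (half-open) cubes of side length `s`. -/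
structure CubePartition (d : ℕ) (s : ℝ) where
  cell : ℕ → Set (Pt d)
  isCube : ∀ j, ∃ a : Pt d, cell j = {x | ∀ i, a i ≤ x i ∧ x i < a i + s}
  covers : ∀ x : Pt d, ∃! j, x ∈ cell j

namespace CubePartition

/-- Index of the unique cell containing `x`. -/
def idx (𝒜 : CubePartition d s) (x : Pt d) : ℕ := (𝒜.covers x).choose

/-- The unique cell `A(x)` containing `x`. -/
def cellOf (𝒜 : CubePartition d s) (x : Pt d) : Set (Pt d) := 𝒜.cell (𝒜.idx x)

/-- Indices of cells intersecting `X`. -/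
def J (𝒜 : CubePartition d s) : Set ℕ := {j | (𝒜.cell j ∩ cubeX d).Nonempty}

/-- Indices of cells near the decision boundary. -/
def JN (𝒜 : CubePartition d s) (η : Pt d → ℝ) (r : ℝ) : Set ℕ :=
  {j | j ∈ 𝒜.J ∧ ∀ x ∈ 𝒜.cell j ∩ cubeX d, Δ η x ≤ 3 * r}

/-- Indices of cells far from the decision boundary. -/
def JF (𝒜 : CubePartition d s) (η : Pt d → ℝ) (r : ℝ) : Set ℕ :=
  {j | j ∈ 𝒜.J ∧ ∀ x ∈ 𝒜.cell j ∩ cubeX d, r ≤ Δ η x}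

/-- `N_r`, the union of the cells near the decision boundary. -/
def Nr (𝒜 : CubePartition d s) (η : Pt d → ℝ) (r : ℝ) : Set (Pt d) := ⋃ j ∈ 𝒜.JN η r, 𝒜.cell j

/-- `F_r`, the union of the cells far from the decision boundary. -/
def Fr (𝒜 : CubePartition d s) (η : Pt d → ℝ) (r : ℝ) : Set (Pt d) := ⋃ j ∈ 𝒜.JF η r, 𝒜.cell j

end CubePartition

/-- `sign` with the convention `sign 0 = 1`. -/
def sgn (t : ℝ) : ℝ := if 0 ≤ t then 1 else -1

/-- The classification loss `L(y,t) = 1_{(-∞,0]}(y · sign t)`. -/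
def cLoss (y t : ℝ) : ℝ := if y * sgn t ≤ 0 then 1 else 0

/-- The restricted classification loss `L_T(x,y,t) = 1_T(x) L(y,t)`. -/
def rLoss (T : Set (Pt d)) (x : Pt d) (y t : ℝ) : ℝ := if x ∈ T then cLoss y t else 0

/-- The joint distribution `P` on `X × {-1,1} ⊆ ℝ^d × ℝ` built from the marginal `μ = P_X`
and the posterior probability `η`. -/
def joint (μ : Measure (Pt d)) (η : Pt d → ℝ) : Measure (Pt d × ℝ) :=
  μ.bind fun x =>
    ENNReal.ofReal (η x) • Measure.dirac (x, 1) + ENNReal.ofReal (1 - η x) • Measure.dirac (x, -1)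

/-- The risk `R_{L_T,P}(f)`. -/
def risk (P : Measure (Pt d × ℝ)) (T : Set (Pt d)) (f : Pt d → ℝ) : ℝ :=
  ∫ z, rLoss T z.1 z.2 (f z.1) ∂P

/-- The Bayes risk `R*_{L_T,P}`, the infimum over all measurable functions. -/
def bayesRisk (P : Measure (Pt d × ℝ)) (T : Set (Pt d)) : ℝ :=
  ⨅ f : { f : Pt d → ℝ // Measurable f }, risk P T f.1

/-- The Bayes decision function `sign (2η - 1)`. -/
def bayesF (η : Pt d → ℝ) (x : Pt d) : ℝ := sgn (2 * η x - 1)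

/-- The empirical risk of `f` on the dataset `D` for the restricted loss `L_T`. -/
def empRisk {n : ℕ} (D : Fin n → Pt d × ℝ) (T : Set (Pt d)) (f : Pt d → ℝ) : ℝ :=
  (∑ i, rLoss T (D i).1 (D i).2 (f (D i).1)) / (n : ℝ)

/-- `f_{D,s}`. -/
def fHat (𝒜 : CubePartition d s) {n : ℕ} (D : Fin n → Pt d × ℝ) (x : Pt d) : ℝ :=
  ((∑ i, if (D i).2 = 1 ∧ (D i).1 ∈ 𝒜.cellOf x then (1 : ℝ) else 0) -
      ∑ i, if (D i).2 = -1 ∧ (D i).1 ∈ 𝒜.cellOf x then (1 : ℝ) else 0) / (n : ℝ)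

/-- The empirical histogram rule `h_{D,s} = sign f_{D,s}`. -/
def histRule (𝒜 : CubePartition d s) {n : ℕ} (D : Fin n → Pt d × ℝ) (x : Pt d) : ℝ :=
  sgn (fHat 𝒜 D x)

/-- `f_{P,s}`. -/
def fBar (𝒜 : CubePartition d s) (P : Measure (Pt d × ℝ)) (x : Pt d) : ℝ :=
  (P (𝒜.cellOf x ×ˢ ({1} : Set ℝ))).toReal - (P (𝒜.cellOf x ×ˢ ({-1} : Set ℝ))).toReal

/-- The infinite-sample histogram rule `h_{P,s} = sign f_{P,s}`. -/
def histRuleP (𝒜 : CubePartition d s) (P : Measure (Pt d × ℝ)) (x : Pt d) : ℝ :=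
  sgn (fBar 𝒜 P x)

/-- The class `𝓕` of `±1`-valued functions which are constant on the cells meeting `X`
(and `0` elsewhere). -/
def histClass (𝒜 : CubePartition d s) : Set (Pt d → ℝ) :=
  {f | ∃ c : ℕ → ℝ, (∀ j, c j = 1 ∨ c j = -1) ∧
    ∀ x, f x = if 𝒜.idx x ∈ 𝒜.J then c (𝒜.idx x) else 0}

/-- The `n`-fold product measure `P^n`. -/
def Pn (μ : Measure (Pt d)) (η : Pt d → ℝ) (n : ℕ) : Measure (Fin n → Pt d × ℝ) :=
  Measure.pi fun _ => joint μ η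


/-!
Write `E = N_r ∩ {f ≠ f*}`. Given `x`, the excess loss `L_{N_r}∘f - L_{N_r}∘f*` vanishes off `E`
and on `E` equals `±1`, with conditional mean `|2η(x) - 1|`. Hence its second moment is `P_X(E)`
and its mean is `∫_E |2η - 1| dP_X`, and it remains to bound `P_X(E)` by each term of the minimum:
by `(3 c_ME r)^α` because `N_r ∩ X ⊆ {Δ_η ≤ 3r}`, and by splitting `E` at the margin
`(c_LC t)^{1/γ}`: the part near the decision boundary is small by the margin exponent, and on the
rest `|2η - 1| ≥ t` by lower control, so Markov's inequality bounds it by `t⁻¹ ∫_E |2η - 1|`.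
-/

def excessLoss (T : Set (Pt d)) (f g : Pt d → ℝ) (z : Pt d × ℝ) : ℝ :=
  rLoss T z.1 z.2 (f z.1) - rLoss T z.1 z.2 (g z.1)

section Pointwise

variable {T : Set (Pt d)} {f : Pt d → ℝ} {η : Pt d → ℝ} {x : Pt d}

lemma average_sq_excessLoss (hfx : f x = 1 ∨ f x = -1) :
    η x * excessLoss T f (bayesF η) (x, 1) ^ 2 + (1 - η x) * excessLoss T f (bayesF η) (x, -1) ^ 2
      = (T ∩ {x | f x ≠ bayesF η x}).indicator 1 x := by
  by_cases hx : x ∈ T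
  · simp only [excessLoss, rLoss, indicator, mem_inter_iff, mem_ofPred_eq, bayesF, hx, true_and,
      if_true]
    rcases hfx with h | h <;> rw [h] <;> unfold sgn <;> split_ifs <;> norm_num [cLoss, sgn] at *
  · simp [excessLoss, rLoss, hx]

lemma average_excessLoss (hfx : f x = 1 ∨ f x = -1) :
    η x * excessLoss T f (bayesF η) (x, 1) + (1 - η x) * excessLoss T f (bayesF η) (x, -1)
      = (T ∩ {x | f x ≠ bayesF η x}).indicator (fun x => |2 * η x - 1|) x := by
  by_cases hx : x ∈ T
  · simp only [excessLoss, rLoss, indicator, mem_inter_iff, mem_ofPred_eq, bayesF, hx, true_and,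
      if_true]
    rcases hfx with h | h <;> rw [h] <;> unfold sgn <;> split_ifs <;> norm_num [cLoss, sgn] at * <;>
      first | (rw [abs_of_nonneg (by linarith)]; ring) | (rw [abs_of_neg (by linarith)]; ring)
  · simp [excessLoss, rLoss, hx]

end Pointwise

section Measurability

lemma measurable_sgn : Measurable sgn :=
  Measurable.ite (measurableSet_le measurable_const measurable_id) measurable_const
    measurable_const

lemma measurable_bayesF {η : Pt d → ℝ} (hη : Measurable η) : Measurable (bayesF η) :=
  measurable_sgn.comp ((hη.const_mul 2).sub measurable_const)

lemma measurableSet_cell (𝒜 : CubePartition d s) (j : ℕ) : MeasurableSet (𝒜.cell j) := by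
  obtain ⟨a, ha⟩ := 𝒜.isCube j
  have : 𝒜.cell j = ⋂ i, (fun x : Pt d => x i) ⁻¹' Ico (a i) (a i + s) := by
    ext x; simp [ha]
  rw [this]
  exact MeasurableSet.iInter fun i => measurable_pi_apply i measurableSet_Ico

lemma measurableSet_Nr (𝒜 : CubePartition d s) (η : Pt d → ℝ) (r : ℝ) :
    MeasurableSet (𝒜.Nr η r) :=
  MeasurableSet.biUnion (to_countable _) fun j _ => measurableSet_cell 𝒜 j

lemma measurable_rLoss {T : Set (Pt d)} (hT : MeasurableSet T) {g : Pt d → ℝ}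
    (hg : Measurable g) : Measurable fun z : Pt d × ℝ => rLoss T z.1 z.2 (g z.1) :=
  Measurable.ite (measurable_fst hT)
    (Measurable.ite (measurableSet_le (measurable_snd.mul (measurable_sgn.comp
      (hg.comp measurable_fst))) measurable_const) measurable_const measurable_const)
    measurable_const

lemma measurable_excessLoss {T : Set (Pt d)} (hT : MeasurableSet T) {f g : Pt d → ℝ}
    (hf : Measurable f) (hg : Measurable g) : Measurable (excessLoss T f g) :=
  (measurable_rLoss hT hf).sub (measurable_rLoss hT hg)

lemma abs_excessLoss_le_one (T : Set (Pt d)) (f g : Pt d → ℝ) (z : Pt d × ℝ) :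
    |excessLoss T f g z| ≤ 1 := by
  unfold excessLoss rLoss cLoss
  split_ifs <;> norm_num

lemma measurableSet_inter_ne_bayesF {T : Set (Pt d)} (hT : MeasurableSet T) {f η : Pt d → ℝ}
    (hf : Measurable f) (hη : Measurable η) : MeasurableSet (T ∩ {x | f x ≠ bayesF η x}) :=
  hT.inter (measurableSet_eq_fun hf (measurable_bayesF hη)).compl

lemma integrable_abs_two_mul_sub_one {μ : Measure (Pt d)} [IsFiniteMeasure μ] {η : Pt d → ℝ}
    (hη : Measurable η) (hη01 : ∀ x, η x ∈ Icc (0 : ℝ) 1) :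
    Integrable (fun x => |2 * η x - 1|) μ :=
  Integrable.of_bound (by fun_prop) 1 <| ae_of_all _ fun x => by
    rw [Real.norm_eq_abs, abs_abs, abs_le]
    constructor <;> linarith [(hη01 x).1, (hη01 x).2]

end Measurability

section Joint

variable {μ : Measure (Pt d)} {η : Pt d → ℝ}

lemma measurable_joint_kernel (hη : Measurable η) :
    Measurable fun x : Pt d =>
      ENNReal.ofReal (η x) • Measure.dirac (x, (1 : ℝ)) +
        ENNReal.ofReal (1 - η x) • Measure.dirac (x, (-1 : ℝ)) := by
  refine Measure.measurable_of_measurable_coe _ fun t ht => ?_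
  simp only [Measure.coe_add, Pi.add_apply, Measure.smul_apply, smul_eq_mul,
    Measure.dirac_apply' _ ht]
  have hind : Measurable (t.indicator (1 : Pt d × ℝ → ℝ≥0∞)) := measurable_one.indicator ht
  exact ((ENNReal.measurable_ofReal.comp hη).mul (hind.comp measurable_prodMk_right)).add
    ((ENNReal.measurable_ofReal.comp (measurable_const.sub hη)).mul
      (hind.comp measurable_prodMk_right))

lemma lintegral_joint (hη : Measurable η) {F : Pt d × ℝ → ℝ≥0∞} (hF : Measurable F) :
    ∫⁻ z, F z ∂joint μ η =
      ∫⁻ x, ENNReal.ofReal (η x) * F (x, 1) + ENNReal.ofReal (1 - η x) * F (x, -1) ∂μ := by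
  rw [joint, Measure.lintegral_bind (measurable_joint_kernel hη).aemeasurable hF.aemeasurable]
  refine lintegral_congr fun x => ?_
  rw [lintegral_add_measure, lintegral_smul_measure, lintegral_smul_measure,
    lintegral_dirac' _ hF, lintegral_dirac' _ hF]
  rfl

lemma isProbabilityMeasure_joint [IsProbabilityMeasure μ] (hη : Measurable η)
    (hη01 : ∀ x, η x ∈ Icc (0 : ℝ) 1) : IsProbabilityMeasure (joint μ η) := by
  constructor
  rw [← setLIntegral_one, setLIntegral_univ, lintegral_joint hη measurable_const]
  have hsum : ∀ x, ENNReal.ofReal (η x) + ENNReal.ofReal (1 - η x) = 1 := fun x => by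
    rw [← ENNReal.ofReal_add (hη01 x).1 (by linarith [(hη01 x).2])]
    norm_num
  simp only [mul_one, hsum, lintegral_const, measure_univ]

lemma integral_joint_of_nonneg (hη : Measurable η) (hη01 : ∀ x, η x ∈ Icc (0 : ℝ) 1)
    {h : Pt d × ℝ → ℝ} (hm : Measurable h) (h0 : ∀ z, 0 ≤ h z) :
    ∫ z, h z ∂joint μ η = ∫ x, η x * h (x, 1) + (1 - η x) * h (x, -1) ∂μ := by
  have hη1 : ∀ x, 0 ≤ 1 - η x := fun x => by linarith [(hη01 x).2]
  rw [integral_eq_lintegral_of_nonneg_ae (ae_of_all _ h0) hm.aestronglyMeasurable,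
    integral_eq_lintegral_of_nonneg_ae
      (ae_of_all _ fun x => add_nonneg (mul_nonneg (hη01 x).1 (h0 _)) (mul_nonneg (hη1 x) (h0 _)))
      (Measurable.aestronglyMeasurable (by fun_prop)),
    lintegral_joint hη hm.ennreal_ofReal]
  congr 1
  refine lintegral_congr fun x => ?_
  rw [ENNReal.ofReal_add (mul_nonneg (hη01 x).1 (h0 _)) (mul_nonneg (hη1 x) (h0 _)),
    ENNReal.ofReal_mul (hη01 x).1, ENNReal.ofReal_mul (hη1 x)]

lemma integral_joint [IsProbabilityMeasure μ] (hη : Measurable η)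
    (hη01 : ∀ x, η x ∈ Icc (0 : ℝ) 1) {h : Pt d × ℝ → ℝ} (hm : Measurable h) {C : ℝ}
    (hC : ∀ z, |h z| ≤ C) :
    ∫ z, h z ∂joint μ η = ∫ x, η x * h (x, 1) + (1 - η x) * h (x, -1) ∂μ := by
  have := isProbabilityMeasure_joint hη hη01 (μ := μ)
  set g : Pt d → ℝ := fun x => η x * h (x, 1) + (1 - η x) * h (x, -1)
  have hgC : ∀ x, |g x| ≤ C := fun x => by
    obtain ⟨h1l, h1u⟩ := abs_le.1 (hC (x, 1))
    obtain ⟨h2l, h2u⟩ := abs_le.1 (hC (x, -1))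
    have := hη01 x
    rw [abs_le]; constructor <;> nlinarith [this.1, this.2]
  have hint : Integrable h (joint μ η) :=
    Integrable.of_bound hm.aestronglyMeasurable C (ae_of_all _ hC)
  have hgint : Integrable g μ :=
    Integrable.of_bound (Measurable.aestronglyMeasurable (by fun_prop)) C (ae_of_all _ hgC)
  have hshift := integral_joint_of_nonneg hη hη01 (μ := μ) (hm.add_const C)
    (fun z => by linarith [neg_abs_le (h z), hC z])
  have hrhs : ∀ x, η x * (h (x, 1) + C) + (1 - η x) * (h (x, -1) + C) = g x + C := fun x => by
    simp only [g]; ring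
  simp only [hrhs] at hshift
  rw [integral_add hint (integrable_const C), integral_add hgint (integrable_const C)] at hshift
  simpa using hshift

end Joint

section ExcessRisk

variable {μ : Measure (Pt d)} {η : Pt d → ℝ} {T : Set (Pt d)} {f : Pt d → ℝ}

lemma integral_sq_excessLoss (hη : Measurable η) (hη01 : ∀ x, η x ∈ Icc (0 : ℝ) 1)
    (hT : MeasurableSet T) (hf : Measurable f) (hfpm : ∀ x, f x = 1 ∨ f x = -1) :
    ∫ z, excessLoss T f (bayesF η) z ^ 2 ∂joint μ η = μ.real (T ∩ {x | f x ≠ bayesF η x}) := by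
  rw [integral_joint_of_nonneg hη hη01
      ((measurable_excessLoss hT hf (measurable_bayesF hη)).pow_const 2) fun z => sq_nonneg _,
    ← integral_indicator_one (measurableSet_inter_ne_bayesF hT hf hη)]
  exact integral_congr_ae (ae_of_all _ fun x => average_sq_excessLoss (hfpm x))

lemma integral_excessLoss [IsProbabilityMeasure μ] (hη : Measurable η)
    (hη01 : ∀ x, η x ∈ Icc (0 : ℝ) 1) (hT : MeasurableSet T) (hf : Measurable f)
    (hfpm : ∀ x, f x = 1 ∨ f x = -1) :
    ∫ z, excessLoss T f (bayesF η) z ∂joint μ η =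
      ∫ x in T ∩ {x | f x ≠ bayesF η x}, |2 * η x - 1| ∂μ := by
  rw [integral_joint hη hη01 (measurable_excessLoss hT hf (measurable_bayesF hη))
      (abs_excessLoss_le_one T f _), ← integral_indicator (measurableSet_inter_ne_bayesF hT hf hη)]
  exact integral_congr_ae (ae_of_all _ fun x => average_excessLoss (hfpm x))

end ExcessRisk

section MarginBounds

variable {μ : Measure (Pt d)} {η : Pt d → ℝ} {α cME γ cLC : ℝ}

lemma Nr_inter_cubeX_subset (𝒜 : CubePartition d s) (r : ℝ) :
    𝒜.Nr η r ∩ cubeX d ⊆ {x | Δ η x ≤ 3 * r} := by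
  rintro x ⟨hxN, hxX⟩
  obtain ⟨j, hj, hxj⟩ := mem_iUnion₂.1 hxN
  exact hj.2 x ⟨hxj, hxX⟩

/-- `HasME` only bounds the sublevel sets `{Δ < t}`; the closed ones follow by continuity. -/
lemma HasME.measure_le_le (hME : HasME μ η α cME) (hcME : 0 < cME) {v : ℝ} (hv : 0 < v) :
    μ {x | Δ η x ≤ v} ≤ ENNReal.ofReal ((cME * v) ^ α) := by
  have hcont : ContinuousAt (fun u => ENNReal.ofReal ((cME * u) ^ α)) v :=
    ENNReal.continuous_ofReal.continuousAt.comp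
      ((Real.continuousAt_rpow_const _ α (Or.inl (by positivity))).comp
        (continuous_const.mul continuous_id).continuousAt)
  refine ge_of_tendsto (hcont.tendsto.mono_left (nhdsWithin_le_nhds (s := Ioi v))) ?_
  filter_upwards [self_mem_nhdsWithin] with u (hu : v < u)
  exact (measure_mono fun x (hx : Δ η x ≤ v) => hx.trans_lt hu).trans (hME u (hv.trans hu))

lemma measureReal_le_of_subset_Nr (hμX : μ (cubeX d)ᶜ = 0) (hME : HasME μ η α cME)
    (hcME : 0 < cME) (𝒜 : CubePartition d s) {r : ℝ} (hr : 0 < r) {E : Set (Pt d)}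
    (hE : E ⊆ 𝒜.Nr η r) : μ.real E ≤ (3 * cME * r) ^ α := by
  have hX : ∀ᵐ x ∂μ, x ∈ cubeX d := ae_iff.2 hμX
  have hmono : μ E ≤ μ {x | Δ η x ≤ 3 * r} :=
    measure_mono_ae (hX.mono fun x hxX hxE => Nr_inter_cubeX_subset 𝒜 r ⟨hE hxE, hxX⟩)
  refine ENNReal.toReal_le_of_le_ofReal (by positivity)
    (hmono.trans ((hME.measure_le_le hcME (by positivity)).trans_eq ?_))
  ring_nf

lemma LowerControl.le_abs_of_rpow_le (hLC : LowerControl μ η γ cLC) (hγ : 0 < γ)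
    (hcLC : 0 < cLC) {t : ℝ} (ht : 0 ≤ t) :
    ∀ᵐ x ∂μ, (cLC * t) ^ γ⁻¹ ≤ Δ η x → t ≤ |2 * η x - 1| := by
  filter_upwards [hLC] with x hx hτ
  have hpow : cLC * t ≤ Δ η x ^ γ := by
    simpa [Real.rpow_inv_rpow (by positivity : 0 ≤ cLC * t) hγ.ne'] using
      Real.rpow_le_rpow (by positivity) hτ hγ.le
  exact le_of_mul_le_mul_left (hpow.trans hx) hcLC

lemma measureReal_le_of_lowerControl [IsFiniteMeasure μ] (hME : HasME μ η α cME)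
    (hLC : LowerControl μ η γ cLC) (hcME : 0 ≤ cME) (hγ : 0 < γ) (hcLC : 0 < cLC) {t : ℝ}
    (ht : 0 < t) {E : Set (Pt d)} (hE : MeasurableSet E)
    (hint : IntegrableOn (fun x => |2 * η x - 1|) E μ) :
    μ.real E ≤ t⁻¹ * ∫ x in E, |2 * η x - 1| ∂μ + cME ^ α * (cLC * t) ^ (α / γ) := by
  set τ := (cLC * t) ^ γ⁻¹
  set S := {x | t ≤ |2 * η x - 1|}
  have hcover : μ.real E ≤ μ.real ({x | Δ η x < τ} ∪ S ∩ E) :=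
    ENNReal.toReal_mono (measure_ne_top _ _) <| measure_mono_ae <|
      (hLC.le_abs_of_rpow_le hγ hcLC ht.le).mono fun x hx hxE =>
        (lt_or_ge (Δ η x) τ).imp id fun h => ⟨hx h, hxE⟩
  have hnear : μ.real {x | Δ η x < τ} ≤ cME ^ α * (cLC * t) ^ (α / γ) := by
    refine ENNReal.toReal_le_of_le_ofReal (by positivity)
      ((hME τ (by positivity)).trans_eq ?_)
    rw [Real.mul_rpow hcME (by positivity), ← Real.rpow_mul (by positivity), inv_mul_eq_div]
  have hmarkov : μ.real (S ∩ E) ≤ t⁻¹ * ∫ x in E, |2 * η x - 1| ∂μ := by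
    rw [← measureReal_restrict_apply' hE, le_inv_mul_iff₀ ht]
    exact mul_meas_ge_le_integral_of_nonneg (ae_of_all _ fun _ => abs_nonneg _) hint t
  linarith [measureReal_union_le (μ := μ) {x | Δ η x < τ} (S ∩ E)]

end MarginBounds

theorem statement14_general (d : ℕ) (s : ℝ)
    (𝒜 : CubePartition d s)
    (μ : Measure (Pt d)) [IsProbabilityMeasure μ] (hμX : μ (cubeX d)ᶜ = 0)
    (η : Pt d → ℝ) (hη : ∀ x, η x ∈ Set.Icc (0 : ℝ) 1) (hmeasη : Measurable η)
    (α cME : ℝ) (hcME : 0 < cME) (hME : HasME μ η α cME)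
    (γ cLC : ℝ) (hγ : 0 < γ) (hcLC : 0 < cLC) (hLC : LowerControl μ η γ cLC)
    (r : ℝ) (hr : 0 < r)
    (f : Pt d → ℝ) (hf : Measurable f) (hfpm : ∀ x, f x = 1 ∨ f x = -1)
    (t : ℝ) (ht : 0 < t) :
    (∫ z, (rLoss (𝒜.Nr η r) z.1 z.2 (f z.1) - rLoss (𝒜.Nr η r) z.1 z.2 (bayesF η z.1)) ^ 2
        ∂(joint μ η)) ≤
      t⁻¹ *
          (∫ z, (rLoss (𝒜.Nr η r) z.1 z.2 (f z.1) - rLoss (𝒜.Nr η r) z.1 z.2 (bayesF η z.1))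
            ∂(joint μ η)) +
        min ((3 * cME * r) ^ α) (cME ^ α * (cLC * t) ^ (α / γ)) := by
  have hNr := measurableSet_Nr 𝒜 η r
  change ∫ z, excessLoss _ f (bayesF η) z ^ 2 ∂_ ≤
    t⁻¹ * ∫ z, excessLoss _ f (bayesF η) z ∂_ + _
  rw [integral_sq_excessLoss hmeasη hη hNr hf hfpm, integral_excessLoss hmeasη hη hNr hf hfpm]
  set E := 𝒜.Nr η r ∩ {x | f x ≠ bayesF η x}
  have hE : MeasurableSet E := measurableSet_inter_ne_bayesF hNr hf hmeasη
  have hnear := measureReal_le_of_subset_Nr hμX hME hcME 𝒜 hr (inter_subset_left : E ⊆ _)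
  have hnoise := measureReal_le_of_lowerControl hME hLC hcME.le hγ hcLC ht hE
    (integrable_abs_two_mul_sub_one hmeasη hη).integrableOn
  have hI : 0 ≤ t⁻¹ * ∫ x in E, |2 * η x - 1| ∂μ :=
    mul_nonneg (inv_nonneg.2 ht.le) (setIntegral_nonneg hE fun _ _ => abs_nonneg _)
  rw [← min_add_add_left]
  exact le_min (by linarith) hnoise

theorem statement14 (d : ℕ) (hd : 1 ≤ d) (s : ℝ) (hs : s ∈ Set.Ioc (0 : ℝ) 1)
    (𝒜 : CubePartition d s)
    (μ : Measure (Pt d)) [IsProbabilityMeasure μ] (hμX : μ (cubeX d)ᶜ = 0)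
    (η : Pt d → ℝ) (hη : ∀ x, η x ∈ Set.Icc (0 : ℝ) 1) (hmeasη : Measurable η)
    (α cME : ℝ) (hα : 0 < α) (hcME : 0 < cME) (hME : HasME μ η α cME)
    (γ cLC : ℝ) (hγ : 0 < γ) (hcLC : 0 < cLC) (hLC : LowerControl μ η γ cLC)
    (r : ℝ) (hr : 0 < r)
    (f : Pt d → ℝ) (hf : Measurable f) (hfpm : ∀ x, f x = 1 ∨ f x = -1)
    (t : ℝ) (ht : 0 < t) :
    (∫ z, (rLoss (𝒜.Nr η r) z.1 z.2 (f z.1) - rLoss (𝒜.Nr η r) z.1 z.2 (bayesF η z.1)) ^ 2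
        ∂(joint μ η)) ≤
      t⁻¹ *
          (∫ z, (rLoss (𝒜.Nr η r) z.1 z.2 (f z.1) - rLoss (𝒜.Nr η r) z.1 z.2 (bayesF η z.1))
            ∂(joint μ η)) +
        min ((3 * cME * r) ^ α) (cME ^ α * (cLC * t) ^ (α / γ)) :=
  statement14_general d s 𝒜 μ hμX η hη hmeasη α cME hcME hME γ cLC hγ hcLC hLC r hr f hf hfpm t ht

end RefinedMargin
end
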